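/- arXiv:2212.10302 — 2 statements merged into one kernel-verified Lean document; each statement's English description precedes it below -/
import Mathlib

section
/- Let η : O → ℝ be a C² entropy for the smooth flux G_α : O → ℝⁿ (α = 1,…,d) with entropy fluxes Q_α : O → ℝ, i.e. DQ_α(U) = Dη(U) · DG_α(U) for all U ∈ O. If U₁ and U₂ are C¹ solutions on [0,T] × ℝ^d of ∂ₜUᵢ + ∂_α G_α(Uᵢ) = ξᵢ Π(Uᵢ), then the relative entropy h = η(U₁) − η(U₂) − Dη(U₂)·(U₁−U₂) satisfies the identity: ∂ₜh + ∂_α( Q_α(U₁) − Q_α(U₂) − Dη(U₂)·(G_α(U₁) − G_α(U₂)) ) = ξ₁(Dη(U₁) − Dη(U₂))·Π(U₁) − ξ₂ (U₁−U₂)·D²η(U₂)·Π(U₂) − ∂_α U₂ · D²η(U₂) · ( G_α(U₁) − G_α(U₂) − DG_α(U₂)·(U₁−U₂) ). -/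
/-!
Differentiating the compatibility relation `DQ = Dη · DG` and using the symmetry of the second
derivatives of `Q` and `G` shows that `D²η(U) · DG(U)` is a symmetric bilinear form. In the sum of
the chain-rule derivatives of the relative entropy and fluxes, `Dη(U₁) - Dη(U₂)` applied to the
equation of `U₁` gives the first source term, while `D²η(U₂)(·, U₁ - U₂)` applied to the equation
of `U₂`, rearranged with the two symmetries, gives the second source term and the linearized part
of the flux term.
-/

open Function

variable {E : Type*} [NormedAddCommGroup E] [NormedSpace ℝ E]

theorem fderiv_fderiv_apply_fderiv_comm {η Q : E → ℝ} {G : E → E} {U : E}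
    (hG : Differentiable ℝ G) (hη' : DifferentiableAt ℝ (fderiv ℝ η) U)
    (hG' : DifferentiableAt ℝ (fderiv ℝ G) U) (hQ : Differentiable ℝ Q)
    (hc : ∀ y V, fderiv ℝ Q y V = fderiv ℝ η y (fderiv ℝ G y V)) (v w : E) :
    fderiv ℝ (fderiv ℝ η) U v (fderiv ℝ G U w)
      = fderiv ℝ (fderiv ℝ η) U w (fderiv ℝ G U v) := by
  have hDQ : ∀ y, HasFDerivAt Q ((fderiv ℝ η y).comp (fderiv ℝ G y)) y := fun y => by
    convert (hQ y).hasFDerivAt using 1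
    exact ContinuousLinearMap.ext fun V => (hc y V).symm
  have symmQ := second_derivative_symmetric hDQ (hη'.hasFDerivAt.clm_comp hG'.hasFDerivAt) v w
  have symmG := second_derivative_symmetric (fun y => (hG y).hasFDerivAt) hG'.hasFDerivAt v w
  simp only [add_apply, ContinuousLinearMap.comp_apply,
    ContinuousLinearMap.compL_apply, ContinuousLinearMap.flip_apply, symmG] at symmQ
  linarith

/-- With `Q = η` and `G = id` this is the relative entropy `η(u) - η(v) - Dη(v)(u - v)`. -/
noncomputable def relativeFlux (η Q : E → ℝ) (G : E → E) (u v : E) : ℝ :=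
  Q u - Q v - fderiv ℝ η v (G u - G v)

section Curves

variable {η Q : E → ℝ} {G : E → E} {u₁ u₂ : ℝ → E} {u₁' u₂' : E} {t : ℝ}

theorem hasDerivAt_relativeFlux (hQ₁ : DifferentiableAt ℝ Q (u₁ t))
    (hQ₂ : DifferentiableAt ℝ Q (u₂ t)) (hG₁ : DifferentiableAt ℝ G (u₁ t))
    (hG₂ : DifferentiableAt ℝ G (u₂ t)) (hη' : DifferentiableAt ℝ (fderiv ℝ η) (u₂ t))
    (h₁ : HasDerivAt u₁ u₁' t) (h₂ : HasDerivAt u₂ u₂' t) :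
    HasDerivAt (fun s => relativeFlux η Q G (u₁ s) (u₂ s))
      (fderiv ℝ Q (u₁ t) u₁' - fderiv ℝ Q (u₂ t) u₂'
        - (fderiv ℝ (fderiv ℝ η) (u₂ t) u₂' (G (u₁ t) - G (u₂ t))
          + fderiv ℝ η (u₂ t) (fderiv ℝ G (u₁ t) u₁' - fderiv ℝ G (u₂ t) u₂'))) t :=
  ((hQ₁.hasFDerivAt.comp_hasDerivAt t h₁).sub (hQ₂.hasFDerivAt.comp_hasDerivAt t h₂)).sub
    ((hη'.hasFDerivAt.comp_hasDerivAt t h₂).clm_apply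
      ((hG₁.hasFDerivAt.comp_hasDerivAt t h₁).sub (hG₂.hasFDerivAt.comp_hasDerivAt t h₂)))

theorem hasDerivAt_relativeEntropy (hη₁ : DifferentiableAt ℝ η (u₁ t))
    (hη₂ : DifferentiableAt ℝ η (u₂ t)) (hη' : DifferentiableAt ℝ (fderiv ℝ η) (u₂ t))
    (h₁ : HasDerivAt u₁ u₁' t) (h₂ : HasDerivAt u₂ u₂' t) :
    HasDerivAt (fun s => relativeFlux η η id (u₁ s) (u₂ s))
      (fderiv ℝ η (u₁ t) u₁' - fderiv ℝ η (u₂ t) u₂'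
        - (fderiv ℝ (fderiv ℝ η) (u₂ t) u₂' (u₁ t - u₂ t)
          + fderiv ℝ η (u₂ t) (u₁' - u₂'))) t := by
  simpa using hasDerivAt_relativeFlux hη₁ hη₂ differentiableAt_id differentiableAt_id hη' h₁ h₂

end Curves

theorem relativeEntropy_balance {ι : Type*} [Fintype ι] {η : E → ℝ} {G : ι → E → E}
    {Q : ι → E → ℝ} {Pi : E → E} {ξ₁ ξ₂ : ℝ} {u₁ u₂ a₁ a₂ : E} {b₁ b₂ : ι → E}
    (hc : ∀ α U V, fderiv ℝ (Q α) U V = fderiv ℝ η U (fderiv ℝ (G α) U V))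
    (hsymm : IsSymmSndFDerivAt ℝ η u₂)
    (hmixed : ∀ α v w, fderiv ℝ (fderiv ℝ η) u₂ v (fderiv ℝ (G α) u₂ w)
      = fderiv ℝ (fderiv ℝ η) u₂ w (fderiv ℝ (G α) u₂ v))
    (h₁ : a₁ + ∑ α, fderiv ℝ (G α) u₁ (b₁ α) = ξ₁ • Pi u₁)
    (h₂ : a₂ + ∑ α, fderiv ℝ (G α) u₂ (b₂ α) = ξ₂ • Pi u₂) :
    (fderiv ℝ η u₁ a₁ - fderiv ℝ η u₂ a₂
        - (fderiv ℝ (fderiv ℝ η) u₂ a₂ (u₁ - u₂) + fderiv ℝ η u₂ (a₁ - a₂)))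
      + ∑ α, (fderiv ℝ (Q α) u₁ (b₁ α) - fderiv ℝ (Q α) u₂ (b₂ α)
        - (fderiv ℝ (fderiv ℝ η) u₂ (b₂ α) (G α u₁ - G α u₂)
          + fderiv ℝ η u₂ (fderiv ℝ (G α) u₁ (b₁ α) - fderiv ℝ (G α) u₂ (b₂ α))))
      = ξ₁ * (fderiv ℝ η u₁ - fderiv ℝ η u₂) (Pi u₁)
        - ξ₂ * (fderiv ℝ (fderiv ℝ η) u₂ (u₁ - u₂)) (Pi u₂)
        - ∑ α, (fderiv ℝ (fderiv ℝ η) u₂ (b₂ α))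
            (G α u₁ - G α u₂ - fderiv ℝ (G α) u₂ (u₁ - u₂)) := by
  set L := fderiv ℝ (fderiv ℝ η) u₂
  set w := u₁ - u₂
  have hL : ∀ v v', L v v' = L v' v := hsymm
  have e₁ (ℓ : E →L[ℝ] ℝ) : ℓ a₁ + ∑ α, ℓ (fderiv ℝ (G α) u₁ (b₁ α)) = ξ₁ * ℓ (Pi u₁) := by
    simpa [map_sum] using congrArg ℓ h₁
  have e₂ : L a₂ w + ∑ α, L (b₂ α) (fderiv ℝ (G α) u₂ w) = ξ₂ * L w (Pi u₂) := by
    have := congrArg (fun v => L v w) h₂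
    simp only [map_add, map_sum, map_smul, add_apply, sum_apply, smul_apply, smul_eq_mul,
      hL _ w, hmixed _ w] at this
    rwa [hL w a₂] at this
  simp only [hc, map_sub, sub_apply, Finset.sum_sub_distrib, Finset.sum_add_distrib]
  linear_combination e₁ (fderiv ℝ η u₁) - e₁ (fderiv ℝ η u₂) - e₂

theorem stmt_11_general
    (n d : ℕ) (ξ₁ ξ₂ : ℝ)
    (η : EuclideanSpace ℝ (Fin n) → ℝ)
    (Gf : Fin d → EuclideanSpace ℝ (Fin n) → EuclideanSpace ℝ (Fin n))
    (Q : Fin d → EuclideanSpace ℝ (Fin n) → ℝ)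
    (Pi : EuclideanSpace ℝ (Fin n) → EuclideanSpace ℝ (Fin n))
    (hη : ContDiff ℝ 2 η) (hGf : ∀ α, ContDiff ℝ 2 (Gf α))
    (hQ : ∀ α, ContDiff ℝ 1 (Q α))
    -- compatibility of the entropy pair: DQ_α(U) = Dη(U)·DG_α(U)
    (hcompat : ∀ α U V, fderiv ℝ (Q α) U V = fderiv ℝ η U (fderiv ℝ (Gf α) U V))
    -- two C¹ solutions U₁, U₂ with their time and space partial derivatives
    (U₁ U₂ : ℝ → (Fin d → ℝ) → EuclideanSpace ℝ (Fin n))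
    (dtU₁ dtU₂ : ℝ → (Fin d → ℝ) → EuclideanSpace ℝ (Fin n))
    (dxU₁ dxU₂ : Fin d → ℝ → (Fin d → ℝ) → EuclideanSpace ℝ (Fin n))
    (hdtU₁ : ∀ t x, HasDerivAt (fun s => U₁ s x) (dtU₁ t x) t)
    (hdtU₂ : ∀ t x, HasDerivAt (fun s => U₂ s x) (dtU₂ t x) t)
    (hdxU₁ : ∀ α t x, HasDerivAt (fun r => U₁ t (update x α r)) (dxU₁ α t x) (x α))
    (hdxU₂ : ∀ α t x, HasDerivAt (fun r => U₂ t (update x α r)) (dxU₂ α t x) (x α))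
    -- the two systems of balance laws
    (hpde₁ : ∀ t x, dtU₁ t x + ∑ α, fderiv ℝ (Gf α) (U₁ t x) (dxU₁ α t x)
      = ξ₁ • Pi (U₁ t x))
    (hpde₂ : ∀ t x, dtU₂ t x + ∑ α, fderiv ℝ (Gf α) (U₂ t x) (dxU₂ α t x)
      = ξ₂ • Pi (U₂ t x)) :
    -- the relative entropy h and relative entropy fluxes q_α are differentiable and
    -- satisfy the relative-entropy identity
    ∀ t x, ∃ (ht' : ℝ) (q' : Fin d → ℝ),
      HasDerivAt
        (fun s => η (U₁ s x) - η (U₂ s x) - fderiv ℝ η (U₂ s x) (U₁ s x - U₂ s x))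
        ht' t ∧
      (∀ α, HasDerivAt
        (fun r =>
          Q α (U₁ t (update x α r)) - Q α (U₂ t (update x α r))
            - fderiv ℝ η (U₂ t (update x α r))
                (Gf α (U₁ t (update x α r)) - Gf α (U₂ t (update x α r))))
        (q' α) (x α)) ∧
      ht' + ∑ α, q' α
        = ξ₁ * (fderiv ℝ η (U₁ t x) - fderiv ℝ η (U₂ t x)) (Pi (U₁ t x))
          - ξ₂ * (fderiv ℝ (fderiv ℝ η) (U₂ t x) (U₁ t x - U₂ t x)) (Pi (U₂ t x))
          - ∑ α, (fderiv ℝ (fderiv ℝ η) (U₂ t x) (dxU₂ α t x))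
              (Gf α (U₁ t x) - Gf α (U₂ t x)
                - fderiv ℝ (Gf α) (U₂ t x) (U₁ t x - U₂ t x)) := by
  intro t x
  have dη : Differentiable ℝ η := hη.differentiable two_ne_zero
  have dη' : Differentiable ℝ (fderiv ℝ η) := (hη.fderiv_right le_rfl).differentiable one_ne_zero
  have dG α : Differentiable ℝ (Gf α) := (hGf α).differentiable two_ne_zero
  have dG' α : Differentiable ℝ (fderiv ℝ (Gf α)) :=
    ((hGf α).fderiv_right le_rfl).differentiable one_ne_zero
  have dQ α : Differentiable ℝ (Q α) := (hQ α).differentiable one_ne_zero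
  have hspace (α : Fin d) := by
    have := hasDerivAt_relativeFlux (dQ α _) (dQ α _) (dG α _) (dG α _) (dη' _)
      (hdxU₁ α t x) (hdxU₂ α t x)
    rwa [update_eq_self] at this
  refine ⟨_, _, hasDerivAt_relativeEntropy (dη _) (dη _) (dη' _) (hdtU₁ t x) (hdtU₂ t x),
    hspace, ?_⟩
  exact relativeEntropy_balance hcompat (hη.contDiffAt.isSymmSndFDerivAt (by simp))
    (fun α => fderiv_fderiv_apply_fderiv_comm (dG α) (dη' _) (dG' α _) (dQ α) (hcompat α))
    (hpde₁ t x) (hpde₂ t x)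

/-- Dafermos's relative-entropy identity for two classical solutions of
∂ₜU + ∂_α G_α(U) = ξ Π(U) with relaxation parameters ξ₁, ξ₂ and an entropy pair
(η, Q_α) satisfying DQ_α = Dη·DG_α. -/
theorem stmt_11
    (n d : ℕ) (ξ₁ ξ₂ : ℝ)
    (η : EuclideanSpace ℝ (Fin n) → ℝ)
    (Gf : Fin d → EuclideanSpace ℝ (Fin n) → EuclideanSpace ℝ (Fin n))
    (Q : Fin d → EuclideanSpace ℝ (Fin n) → ℝ)
    (Pi : EuclideanSpace ℝ (Fin n) → EuclideanSpace ℝ (Fin n))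
    (hη : ContDiff ℝ 2 η) (hGf : ∀ α, ContDiff ℝ 2 (Gf α))
    (hQ : ∀ α, ContDiff ℝ 1 (Q α)) (hPi : Continuous Pi)
    -- compatibility of the entropy pair: DQ_α(U) = Dη(U)·DG_α(U)
    (hcompat : ∀ α U V, fderiv ℝ (Q α) U V = fderiv ℝ η U (fderiv ℝ (Gf α) U V))
    -- two C¹ solutions U₁, U₂ with their time and space partial derivatives
    (U₁ U₂ : ℝ → (Fin d → ℝ) → EuclideanSpace ℝ (Fin n))
    (dtU₁ dtU₂ : ℝ → (Fin d → ℝ) → EuclideanSpace ℝ (Fin n))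
    (dxU₁ dxU₂ : Fin d → ℝ → (Fin d → ℝ) → EuclideanSpace ℝ (Fin n))
    (hdtU₁ : ∀ t x, HasDerivAt (fun s => U₁ s x) (dtU₁ t x) t)
    (hdtU₂ : ∀ t x, HasDerivAt (fun s => U₂ s x) (dtU₂ t x) t)
    (hdxU₁ : ∀ α t x, HasDerivAt (fun r => U₁ t (update x α r)) (dxU₁ α t x) (x α))
    (hdxU₂ : ∀ α t x, HasDerivAt (fun r => U₂ t (update x α r)) (dxU₂ α t x) (x α))
    -- the two systems of balance laws
    (hpde₁ : ∀ t x, dtU₁ t x + ∑ α, fderiv ℝ (Gf α) (U₁ t x) (dxU₁ α t x)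
      = ξ₁ • Pi (U₁ t x))
    (hpde₂ : ∀ t x, dtU₂ t x + ∑ α, fderiv ℝ (Gf α) (U₂ t x) (dxU₂ α t x)
      = ξ₂ • Pi (U₂ t x)) :
    -- the relative entropy h and relative entropy fluxes q_α are differentiable and
    -- satisfy the relative-entropy identity
    ∀ t x, ∃ (ht' : ℝ) (q' : Fin d → ℝ),
      HasDerivAt
        (fun s => η (U₁ s x) - η (U₂ s x) - fderiv ℝ η (U₂ s x) (U₁ s x - U₂ s x))
        ht' t ∧
      (∀ α, HasDerivAt
        (fun r =>
          Q α (U₁ t (update x α r)) - Q α (U₂ t (update x α r))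
            - fderiv ℝ η (U₂ t (update x α r))
                (Gf α (U₁ t (update x α r)) - Gf α (U₂ t (update x α r))))
        (q' α) (x α)) ∧
      ht' + ∑ α, q' α
        = ξ₁ * (fderiv ℝ η (U₁ t x) - fderiv ℝ η (U₂ t x)) (Pi (U₁ t x))
          - ξ₂ * (fderiv ℝ (fderiv ℝ η) (U₂ t x) (U₁ t x - U₂ t x)) (Pi (U₂ t x))
          - ∑ α, (fderiv ℝ (fderiv ℝ η) (U₂ t x) (dxU₂ α t x))
              (Gf α (U₁ t x) - Gf α (U₂ t x)
                - fderiv ℝ (Gf α) (U₂ t x) (U₁ t x - U₂ t x)) :=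
  stmt_11_general n d ξ₁ ξ₂ η Gf Q Pi hη hGf hQ hcompat U₁ U₂ dtU₁ dtU₂ dxU₁ dxU₂ hdtU₁ hdtU₂ hdxU₁
    hdxU₂ hpde₁ hpde₂
end

section
/- Let d ≥ 1, u : ℝ^d → ℝ^d and F : ℝ^d → GL(d,ℝ) smooth fields, and ρ > 0 smooth with ∂ₜρ + div(ρu) = 0. Suppose ρF satisfies the conservation law ∂ₜ(ρ F^{jα}) + ∂_i( ρ(u^i F^{jα} − u^j F^{iα}) ) = 0 (componentwise form of ∂ₜ(ρF) − ∇×(ρFᵀ×u) = 0) together with the Piola identity ∂_i(ρ F^{iα}) = 0 for each α. Then F satisfies the transport equation (∂ₜ + u·∇)F = (∇u)F, i.e. ∂ₜF^{jα} + u^i ∂_i F^{jα} = (∂_i u^j) F^{iα}. -/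
open Set Function

/-!
Expanding the divergence in the conservation law for `ρF` by the product rule, the result is
`F^{jα}` times the mass balance, minus `u^j` times the Piola divergence `∂_i(ρF^{iα})`, plus `ρ`
times the transport defect `∂ₜF^{jα} + u^i ∂_i F^{jα} - (∂_i u^j) F^{iα}`. With the first two
vanishing and `ρ ≠ 0`, the defect vanishes.
-/

section ConservationIdentity

variable {R ι : Type*} [CommRing R] [Fintype ι]
  (ρ ρt : R) (ρx u : ι → R) (ux : ι → ι → R) (Fα : ι → R) (Ft : R) (Fx : ι → ι → R) (j : ι)

/-- Here `Fα i = F^{iα}`, `Ft = ∂ₜF^{jα}`, `Fx i k = ∂_i F^{kα}`, `ρx i = ∂_i ρ`, `ux i k = ∂_i u^k`. -/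
theorem conservation_eq_mass_sub_piola_add_transport :
    (ρt * Fα j + ρ * Ft)
        + ∑ i, (ρx i * (u i * Fα j - u j * Fα i)
          + ρ * (ux i i * Fα j + u i * Fx i j - ux i j * Fα i - u j * Fx i i))
      = Fα j * (ρt + ∑ i, (ρx i * u i + ρ * ux i i))
        - u j * ∑ i, (ρx i * Fα i + ρ * Fx i i)
        + ρ * (Ft + ∑ i, u i * Fx i j - ∑ i, ux i j * Fα i) := by
  simp only [Finset.sum_add_distrib, Finset.sum_sub_distrib, Finset.mul_sum, mul_add, mul_sub,
    mul_comm, mul_left_comm]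
  ring

theorem transport_of_conservation [NoZeroDivisors R] (hρ : ρ ≠ 0)
    (hmass : ρt + ∑ i, (ρx i * u i + ρ * ux i i) = 0)
    (hpiola : ∑ i, (ρx i * Fα i + ρ * Fx i i) = 0)
    (hcons : (ρt * Fα j + ρ * Ft)
        + ∑ i, (ρx i * (u i * Fα j - u j * Fα i)
          + ρ * (ux i i * Fα j + u i * Fx i j - ux i j * Fα i - u j * Fx i i)) = 0) :
    Ft + ∑ i, u i * Fx i j = ∑ i, ux i j * Fα i := by
  rw [conservation_eq_mass_sub_piola_add_transport, hmass, hpiola, mul_zero, mul_zero,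
    sub_zero, zero_add, mul_eq_zero] at hcons
  exact sub_eq_zero.mp (hcons.resolve_left hρ)

end ConservationIdentity

theorem stmt_14_general
    (d : ℕ)
    (ρ dtρ : ℝ → (Fin d → ℝ) → ℝ)
    (dxρ : Fin d → ℝ → (Fin d → ℝ) → ℝ)
    (u : ℝ → (Fin d → ℝ) → Fin d → ℝ)
    (dxu : Fin d → ℝ → (Fin d → ℝ) → Fin d → ℝ)
    (F dtF : ℝ → (Fin d → ℝ) → Matrix (Fin d) (Fin d) ℝ)
    (dxF : Fin d → ℝ → (Fin d → ℝ) → Matrix (Fin d) (Fin d) ℝ)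
    -- ρ > 0
    (hρpos : ∀ t x, 0 < ρ t x)
    -- mass conservation ∂ₜρ + div(ρu) = 0
    (hmass : ∀ t x, dtρ t x + ∑ i, (dxρ i t x * u t x i + ρ t x * dxu i t x i) = 0)
    -- conservation law ∂ₜ(ρF^{jα}) + ∂_i(ρ(u^i F^{jα} − u^j F^{iα})) = 0
    (hcons : ∀ t x j α,
      (dtρ t x * F t x j α + ρ t x * dtF t x j α)
        + ∑ i, (dxρ i t x * (u t x i * F t x j α - u t x j * F t x i α)
            + ρ t x * (dxu i t x i * F t x j α + u t x i * dxF i t x j α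
                - dxu i t x j * F t x i α - u t x j * dxF i t x i α)) = 0)
    -- Piola identity ∂_i(ρF^{iα}) = 0
    (hpiola : ∀ t x α, ∑ i, (dxρ i t x * F t x i α + ρ t x * dxF i t x i α) = 0) :
    -- transport law ∂ₜF^{jα} + u^i ∂_i F^{jα} = (∂_i u^j) F^{iα}
    ∀ t x j α,
      dtF t x j α + ∑ i, u t x i * dxF i t x j α
        = ∑ i, dxu i t x j * F t x i α :=
  fun t x j α => transport_of_conservation (ρ t x) (dtρ t x) (dxρ · t x) (u t x) (dxu · t x)
    (F t x · α) (dtF t x j α) (dxF · t x · α) j (hρpos t x).ne' (hmass t x) (hpiola t x α)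
    (hcons t x j α)

/-- The conservative evolution ∂ₜ(ρF) − ∇×(ρFᵀ×u) = 0 of the deformation gradient,
together with the Piola identity div(ρFᵀ) = 0 and mass conservation, implies the
transport law (∂ₜ + u·∇)F = (∇u)F.
Here `dxρ i`, `dxu i · j` and `dxF i · j α` denote ∂_i ρ, ∂_i u^j and ∂_i F^{jα}. -/
theorem stmt_14
    (d : ℕ) (hd : 1 ≤ d)
    (ρ dtρ : ℝ → (Fin d → ℝ) → ℝ)
    (dxρ : Fin d → ℝ → (Fin d → ℝ) → ℝ)
    (u : ℝ → (Fin d → ℝ) → Fin d → ℝ)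
    (dxu : Fin d → ℝ → (Fin d → ℝ) → Fin d → ℝ)
    (F dtF : ℝ → (Fin d → ℝ) → Matrix (Fin d) (Fin d) ℝ)
    (dxF : Fin d → ℝ → (Fin d → ℝ) → Matrix (Fin d) (Fin d) ℝ)
    -- smoothness: the indicated partial derivatives exist
    (hdtρ : ∀ t x, HasDerivAt (fun s => ρ s x) (dtρ t x) t)
    (hdxρ : ∀ i t x, HasDerivAt (fun r => ρ t (update x i r)) (dxρ i t x) (x i))
    (hdxu : ∀ i t x j, HasDerivAt (fun r => u t (update x i r) j) (dxu i t x j) (x i))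
    (hdtF : ∀ t x j α, HasDerivAt (fun s => F s x j α) (dtF t x j α) t)
    (hdxF : ∀ i t x j α,
      HasDerivAt (fun r => F t (update x i r) j α) (dxF i t x j α) (x i))
    -- ρ > 0 and F invertible
    (hρpos : ∀ t x, 0 < ρ t x)
    (hFinv : ∀ t x, IsUnit (F t x))
    -- mass conservation ∂ₜρ + div(ρu) = 0
    (hmass : ∀ t x, dtρ t x + ∑ i, (dxρ i t x * u t x i + ρ t x * dxu i t x i) = 0)
    -- conservation law ∂ₜ(ρF^{jα}) + ∂_i(ρ(u^i F^{jα} − u^j F^{iα})) = 0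
    (hcons : ∀ t x j α,
      (dtρ t x * F t x j α + ρ t x * dtF t x j α)
        + ∑ i, (dxρ i t x * (u t x i * F t x j α - u t x j * F t x i α)
            + ρ t x * (dxu i t x i * F t x j α + u t x i * dxF i t x j α
                - dxu i t x j * F t x i α - u t x j * dxF i t x i α)) = 0)
    -- Piola identity ∂_i(ρF^{iα}) = 0
    (hpiola : ∀ t x α, ∑ i, (dxρ i t x * F t x i α + ρ t x * dxF i t x i α) = 0) :
    -- transport law ∂ₜF^{jα} + u^i ∂_i F^{jα} = (∂_i u^j) F^{iα}
    ∀ t x j α,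
      dtF t x j α + ∑ i, u t x i * dxF i t x j α
        = ∑ i, dxu i t x j * F t x i α :=
  stmt_14_general d ρ dtρ dxρ u dxu F dtF dxF hρpos hmass hcons hpiola
end
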